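/- arXiv:2409.03505 — 4 statements merged into one kernel-verified Lean document; each statement's English description precedes it below -/
import Mathlib

section
/- Fix q ∈ (0,1) and let F be the CDF of a probability distribution on [0,∞) with finite mean. Let F̂ be the empirical CDF of n IID samples from F and let â = inf{a ≥ 0 : F̂(a) ≥ q} be the SAA decision. Then the expected additive regret satisfies E[L(â)] − L(a*) = ∫₀^{a*} (q − F(z))·Pr[F̂(z) ≥ q] dz + ∫_{a*}^∞ (F(z) − q)·Pr[F̂(z) < q] dz. -/
open MeasureTheory Set

noncomputable section

/-- The Newsvendor loss `ℓ(a,Z) = q·max{Z−a,0} + (1−q)·max{a−Z,0}` with critical quantile `q`. -/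
def nvLoss (q a z : ℝ) : ℝ := q * max (z - a) 0 + (1 - q) * max (a - z) 0

/-- The expected Newsvendor loss `L(a)` under the demand distribution `μ`. -/
def expLoss (q : ℝ) (μ : Measure ℝ) (a : ℝ) : ℝ := ∫ z, nvLoss q a z ∂μ

/-- The CDF of the demand distribution `μ`. -/
def cdf' (μ : Measure ℝ) (z : ℝ) : ℝ := (μ (Iic z)).toReal

/-- The optimal decision `a* = inf {a ≥ 0 : F(a) ≥ q}`. -/
def optDec (q : ℝ) (μ : Measure ℝ) : ℝ := sInf {a : ℝ | 0 ≤ a ∧ q ≤ cdf' μ a}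

/-- The empirical CDF of the samples `ω : Fin n → ℝ`. -/
def empCdf (n : ℕ) (ω : Fin n → ℝ) (z : ℝ) : ℝ :=
  (∑ i : Fin n, if ω i ≤ z then (1 : ℝ) else 0) / n

/-- The SAA (sample average approximation) decision `â = inf {a ≥ 0 : F̂(a) ≥ q}`. -/
def saa (q : ℝ) (n : ℕ) (ω : Fin n → ℝ) : ℝ := sInf {a : ℝ | 0 ≤ a ∧ q ≤ empCdf n ω a}

/-- The joint law of `n` iid samples from `μ`. -/
def iid (μ : Measure ℝ) (n : ℕ) : Measure (Fin n → ℝ) := Measure.pi fun _ => μ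

/-- A distribution `μ` is `(β,γ,ζ)`-clustered if
`|a − a*| ≤ (1/γ)·|F(a) − q|^{1/(β+1)}` for all `a ∈ [a*−ζ, a*+ζ]`. -/
def Clustered (q β γ ζ : ℝ) (μ : Measure ℝ) : Prop :=
  ∀ a ∈ Icc (optDec q μ - ζ) (optDec q μ + ζ),
    |a - optDec q μ| ≤ (1 / γ) * |cdf' μ a - q| ^ ((1 : ℝ) / (β + 1))

/-! For decisions `a, c ≥ 0` the layer-cake formula `L(a) - L(c) = ∫_c^a (F - q)` splits the
regret of `a` into `∫ (q - F)` over `{z ∈ (0, c] | a ≤ z}` and `∫ (F - q)` over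
`{z > c | z < a}`. The SAA decision is the optimal decision for the empirical distribution, so
for `z ≥ 0` we have `â ≤ z ↔ q ≤ F̂(z)`. Taking expectations and exchanging the order of
integration turns these indicators into the probabilities of the statement; Fubini applies
because above `a*` the integrand vanishes beyond `∑ |Zᵢ|`, which has finite mean. -/

open ProbabilityTheory
open scoped ENNReal

section Fubini

variable {Ω : Type*} [MeasurableSpace Ω] {P : Measure Ω}

theorem integral_integral_indicator_swap [SFinite P] {β : Type*} [MeasurableSpace β]
    {ν : Measure β} [SFinite ν] {A : Set (Ω × β)} (hA : MeasurableSet A) {h : β → ℝ}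
    (hint : Integrable (A.indicator fun p => h p.2) (P.prod ν)) :
    ∫ ω, ∫ t, A.indicator (fun p => h p.2) (ω, t) ∂ν ∂P
      = ∫ t, h t * (P {ω | (ω, t) ∈ A}).toReal ∂ν := by
  rw [integral_integral_swap (f := fun ω t => A.indicator (fun p => h p.2) (ω, t)) hint]
  refine integral_congr_ae (Filter.Eventually.of_forall fun t => ?_)
  have hAt : MeasurableSet {ω | (ω, t) ∈ A} := measurable_prodMk_right hA
  calc ∫ ω, A.indicator (fun p => h p.2) (ω, t) ∂P
      = ∫ ω, {ω | (ω, t) ∈ A}.indicator (fun _ => h t) ω ∂P := rfl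
    _ = h t * (P {ω | (ω, t) ∈ A}).toReal := by
        rw [integral_indicator_const _ hAt, smul_eq_mul, mul_comm, measureReal_def]

theorem integrable_prod_restrict_Ioi_of_norm_le [IsFiniteMeasure P] {f : Ω × ℝ → ℝ}
    {M : Ω → ℝ} {c C : ℝ} (hf : AEStronglyMeasurable f (P.prod (volume.restrict (Ioi c))))
    (hM : Integrable M P) (hC : ∀ p, ‖f p‖ ≤ C) (hvanish : ∀ ω t, M ω ≤ t → f (ω, t) = 0) :
    Integrable f (P.prod (volume.restrict (Ioi c))) := by
  refine ⟨hf, ?_⟩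
  have hinner (ω : Ω) :
      ∫⁻ t in Ioi c, ‖f (ω, t)‖ₑ ≤ ENNReal.ofReal (C * (M ω - c)) := by
    have hC0 : 0 ≤ C := (norm_nonneg _).trans (hC (ω, c))
    calc ∫⁻ t in Ioi c, ‖f (ω, t)‖ₑ
        ≤ ∫⁻ t in Ioi c, (Iio (M ω)).indicator (fun _ => ENNReal.ofReal C) t := by
          refine lintegral_mono fun t => ?_
          by_cases ht : t < M ω
          · rw [indicator_of_mem (mem_Iio.2 ht), ← ofReal_norm]
            exact ENNReal.ofReal_le_ofReal (hC _)
          · simp [hvanish ω t (not_lt.1 ht), ht]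
      _ = ENNReal.ofReal C * volume (Iio (M ω) ∩ Ioi c) := by
          rw [lintegral_indicator_const measurableSet_Iio,
            Measure.restrict_apply measurableSet_Iio]
      _ = ENNReal.ofReal (C * (M ω - c)) := by
          rw [Iio_inter_Ioi, Real.volume_Ioo, ENNReal.ofReal_mul hC0]
  calc ∫⁻ p, ‖f p‖ₑ ∂(P.prod (volume.restrict (Ioi c)))
      ≤ ∫⁻ ω, (∫⁻ t in Ioi c, ‖f (ω, t)‖ₑ) ∂P := lintegral_prod_le _
    _ ≤ ∫⁻ ω, ENNReal.ofReal (C * (M ω - c)) ∂P := lintegral_mono hinner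
    _ < ∞ := ((hM.sub (integrable_const c)).const_mul C).lintegral_lt_top

end Fubini

section Quantile

variable {ν : Measure ℝ} [IsProbabilityMeasure ν] {q : ℝ}

theorem cdf'_eq_cdf : cdf' ν = cdf ν := by
  ext z
  rw [cdf_eq_real]
  rfl

theorem measurable_cdf' : Measurable (cdf' ν) :=
  cdf'_eq_cdf (ν := ν) ▸ (cdf ν).mono.measurable

theorem abs_sub_cdf'_le_one (hq : q ∈ Icc 0 1) (t : ℝ) : |q - cdf' ν t| ≤ 1 := by
  rw [cdf'_eq_cdf]
  exact abs_sub_le_of_nonneg_of_le hq.1 hq.2 (cdf_nonneg ν t) (cdf_le_one ν t)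

theorem exists_nonneg_le_cdf' (hq : q < 1) : ∃ a, 0 ≤ a ∧ q ≤ cdf' ν a := by
  rw [cdf'_eq_cdf]
  obtain ⟨a, hqa, ha⟩ := (((tendsto_cdf_atTop ν).eventually (eventually_gt_nhds hq)).and
    (Filter.eventually_ge_atTop 0)).exists
  exact ⟨a, ha, hqa.le⟩

theorem optDec_nonneg (hq : q < 1) : 0 ≤ optDec q ν :=
  le_csInf (exists_nonneg_le_cdf' hq) fun _ ha => ha.1

theorem le_cdf'_of_optDec_lt (hq : q < 1) {t : ℝ} (ht : optDec q ν < t) : q ≤ cdf' ν t := by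
  obtain ⟨a, ha, hat⟩ := exists_lt_of_csInf_lt (exists_nonneg_le_cdf' hq) ht
  rw [cdf'_eq_cdf] at ha ⊢
  exact ha.2.trans ((cdf ν).mono hat.le)

theorem optDec_le_iff (hq : q < 1) {t : ℝ} (ht : 0 ≤ t) :
    optDec q ν ≤ t ↔ q ≤ cdf' ν t := by
  refine ⟨fun h => ?_, fun h => csInf_le ⟨0, fun _ ha => ha.1⟩ ⟨ht, h⟩⟩
  have hattained : q ≤ cdf ν (optDec q ν) :=
    ge_of_tendsto (((cdf ν).right_continuous _).mono Ioi_subset_Ici_self)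
      (eventually_nhdsWithin_of_forall fun _ hs =>
        cdf'_eq_cdf (ν := ν) ▸ le_cdf'_of_optDec_lt hq hs)
  rw [cdf'_eq_cdf]
  exact hattained.trans ((cdf ν).mono h)

end Quantile

section Empirical

variable {n : ℕ}

def empiricalMeasure (n : ℕ) (ω : Fin n → ℝ) : Measure ℝ :=
  (n : ℝ≥0∞)⁻¹ • ∑ i, Measure.dirac (ω i)

theorem isProbabilityMeasure_empiricalMeasure (hn : n ≠ 0) (ω : Fin n → ℝ) :
    IsProbabilityMeasure (empiricalMeasure n ω) := by
  constructor
  simp [empiricalMeasure, ENNReal.inv_mul_cancel (Nat.cast_ne_zero.2 hn)]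

theorem empCdf_eq_cdf' (ω : Fin n → ℝ) : empCdf n ω = cdf' (empiricalMeasure n ω) := by
  ext z
  simp [empCdf, cdf', empiricalMeasure, Measure.dirac_apply' _ measurableSet_Iic,
    indicator_apply, div_eq_inv_mul]

theorem saa_eq_optDec (q : ℝ) (ω : Fin n → ℝ) :
    saa q n ω = optDec q (empiricalMeasure n ω) := by
  simp only [saa, optDec, empCdf_eq_cdf']

end Empirical

section Loss

variable {μ : Measure ℝ} {q : ℝ}

theorem nvLoss_eq (q a z : ℝ) : nvLoss q a z = q * (z - a) + max (a - z) 0 := by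
  unfold nvLoss
  rcases le_total z a with h | h
  · rw [max_eq_right (sub_nonpos.2 h), max_eq_left (sub_nonneg.2 h)]; ring
  · rw [max_eq_left (sub_nonneg.2 h), max_eq_right (sub_nonpos.2 h)]; ring

theorem integrable_max_sub_zero [IsFiniteMeasure μ] (hmean : Integrable (fun z => z) μ)
    (a : ℝ) :
    Integrable (fun z => max (a - z) 0) μ :=
  ((integrable_const a).sub hmean).sup (integrable_const 0)

theorem integrable_nvLoss [IsFiniteMeasure μ] (hmean : Integrable (fun z => z) μ)
    (q a : ℝ) :
    Integrable (nvLoss q a) μ := by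
  simp only [funext (nvLoss_eq q a)]
  exact ((hmean.sub (integrable_const a)).const_mul q).add (integrable_max_sub_zero hmean a)

theorem max_sub_sub_max_sub_eq_volume_real {a b : ℝ} (hba : b ≤ a) (z : ℝ) :
    max (a - z) 0 - max (b - z) 0 = volume.real (Ioc b a ∩ Ici z) := by
  rw [← measureReal_congr ((ae_eq_refl _).inter Ioi_ae_eq_Ici), Ioc_inter_Ioi,
    Real.volume_real_Ioc]
  simp only [max_def]
  split_ifs <;> linarith

theorem integral_volume_real_Ioc_inter_Ici [IsFiniteMeasure μ] (a b : ℝ) :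
    ∫ z, volume.real (Ioc b a ∩ Ici z) ∂μ = ∫ t in Ioc b a, cdf' μ t := by
  have hA : MeasurableSet {p : ℝ × ℝ | p.1 ≤ p.2} :=
    measurableSet_le measurable_fst measurable_snd
  have hswap := integral_integral_indicator_swap (P := μ) (ν := volume.restrict (Ioc b a)) hA
    (h := fun _ => 1) ((integrable_const 1).indicator hA)
  simp only [one_mul] at hswap
  refine Eq.trans ?_ hswap
  congr 1 with z
  rw [inter_comm, ← measureReal_restrict_apply measurableSet_Ici,
    ← integral_indicator_one measurableSet_Ici]
  rfl

theorem expLoss_sub_expLoss [IsProbabilityMeasure μ] (hmean : Integrable (fun z => z) μ)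
    {a b : ℝ} (hba : b ≤ a) :
    expLoss q μ a - expLoss q μ b = ∫ t in Ioc b a, (cdf' μ t - q) := by
  have hcdf : IntegrableOn (cdf' μ) (Ioc b a) := by
    refine Integrable.of_bound measurable_cdf'.aestronglyMeasurable 1
      (Filter.Eventually.of_forall fun t => ?_)
    rw [cdf'_eq_cdf, Real.norm_of_nonneg (cdf_nonneg μ t)]
    exact cdf_le_one μ t
  have hdiff : Integrable (fun z => max (a - z) 0 - max (b - z) 0) μ :=
    (integrable_max_sub_zero hmean a).sub (integrable_max_sub_zero hmean b)
  calc expLoss q μ a - expLoss q μ b = ∫ z, (nvLoss q a z - nvLoss q b z) ∂μ :=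
        (integral_sub (integrable_nvLoss hmean q a) (integrable_nvLoss hmean q b)).symm
    _ = ∫ z, (q * (b - a) + (max (a - z) 0 - max (b - z) 0)) ∂μ := by
        congr 1 with z
        rw [nvLoss_eq, nvLoss_eq]
        ring
    _ = q * (b - a) + ∫ t in Ioc b a, cdf' μ t := by
        rw [integral_add (integrable_const _) hdiff, integral_const,
          ← integral_volume_real_Ioc_inter_Ici]
        simp only [max_sub_sub_max_sub_eq_volume_real hba, probReal_univ, one_smul]
    _ = ∫ t in Ioc b a, (cdf' μ t - q) := by
        rw [integral_sub hcdf (integrableOn_const measure_Ioc_lt_top.ne), setIntegral_const,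
          Real.volume_real_Ioc_of_le hba, smul_eq_mul]
        ring

theorem expLoss_sub_expLoss_eq_setIntegral [IsProbabilityMeasure μ]
    (hmean : Integrable (fun z => z) μ) {a c : ℝ} (ha : 0 ≤ a) :
    expLoss q μ a - expLoss q μ c =
      (∫ t in Ioc 0 c ∩ Ici a, (q - cdf' μ t)) + ∫ t in Ioi c ∩ Iio a, (cdf' μ t - q) := by
  have hbelow : (Ioc 0 c ∩ Ici a : Set ℝ) =ᵐ[volume] Ioc a c := by
    have := (ae_eq_refl (Ioc 0 c)).inter (Ioi_ae_eq_Ici (μ := volume) (a := a)).symm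
    rwa [Ioc_inter_Ioi, max_eq_right ha] at this
  have habove : (Ioi c ∩ Iio a : Set ℝ) =ᵐ[volume] Ioc c a := by
    rw [Ioi_inter_Iio]
    exact Ioo_ae_eq_Ioc
  rw [setIntegral_congr_set hbelow, setIntegral_congr_set habove]
  rcases le_total c a with hca | hac
  · rw [Ioc_eq_empty (not_lt.2 hca), setIntegral_empty, zero_add,
      expLoss_sub_expLoss hmean hca]
  · rw [Ioc_eq_empty (not_lt.2 hac), setIntegral_empty, add_zero, ← neg_sub,
      expLoss_sub_expLoss hmean hac, ← integral_neg]
    simp only [neg_sub]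

theorem expLoss_optDec_sub_expLoss_optDec [IsProbabilityMeasure μ]
    (hmean : Integrable (fun z => z) μ) (hq : q < 1) (ν : Measure ℝ) [IsProbabilityMeasure ν] :
    expLoss q μ (optDec q ν) - expLoss q μ (optDec q μ) =
      (∫ t in Ioc 0 (optDec q μ), {t | q ≤ cdf' ν t}.indicator (fun t => q - cdf' μ t) t)
      + ∫ t in Ioi (optDec q μ), {t | cdf' ν t < q}.indicator (fun t => cdf' μ t - q) t := by
  have hc : 0 ≤ optDec q μ := optDec_nonneg hq
  have hbelow : Ioc 0 (optDec q μ) ∩ {t | q ≤ cdf' ν t}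
      = Ioc 0 (optDec q μ) ∩ Ici (optDec q ν) := by
    ext t
    simp only [mem_inter_iff, mem_ofPred_eq, mem_Ici]
    exact and_congr_right fun ht => (optDec_le_iff hq ht.1.le).symm
  have habove : Ioi (optDec q μ) ∩ {t | cdf' ν t < q}
      = Ioi (optDec q μ) ∩ Iio (optDec q ν) := by
    ext t
    simp only [mem_inter_iff, mem_ofPred_eq, mem_Iio, ← not_le]
    exact and_congr_right fun ht => not_congr (optDec_le_iff hq (hc.trans (le_of_lt ht))).symm
  rw [setIntegral_indicator (measurableSet_le measurable_const measurable_cdf'),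
    setIntegral_indicator (measurableSet_lt measurable_cdf' measurable_const), hbelow, habove,
    expLoss_sub_expLoss_eq_setIntegral hmean (optDec_nonneg hq)]

end Loss

section Sample

variable {q : ℝ} {μ : Measure ℝ} [IsProbabilityMeasure μ] {n : ℕ}

instance isProbabilityMeasure_iid : IsProbabilityMeasure (iid μ n) := by
  unfold iid
  infer_instance

theorem integrable_sum_abs_iid (hmean : Integrable (fun z => z) μ) :
    Integrable (fun ω : Fin n → ℝ => ∑ i, |ω i|) (iid μ n) :=
  integrable_finsetSum _ fun i _ =>
    (measurePreserving_eval _ i).integrable_comp_of_integrable (g := fun x => |x|) hmean.abs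

theorem measurable_empCdf_uncurry :
    Measurable fun p : (Fin n → ℝ) × ℝ => empCdf n p.1 p.2 := by
  unfold empCdf
  refine (Finset.measurable_sum _ fun i _ =>
    Measurable.ite ?_ measurable_const measurable_const).div_const _
  exact measurableSet_le ((measurable_pi_apply i).comp measurable_fst) measurable_snd

theorem empCdf_eq_one_of_sum_abs_le (hn : n ≠ 0) {ω : Fin n → ℝ} {t : ℝ}
    (ht : ∑ i, |ω i| ≤ t) : empCdf n ω t = 1 := by
  have hle (i : Fin n) : ω i ≤ t :=
    (le_abs_self _).trans ((Finset.single_le_sum (fun j _ => abs_nonneg (ω j))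
      (Finset.mem_univ i)).trans ht)
  simp [empCdf, hle, hn]

theorem integrable_indicator_le_empCdf (hq : q ∈ Icc 0 1) (c : ℝ) :
    Integrable
      ({p : (Fin n → ℝ) × ℝ | q ≤ empCdf n p.1 p.2}.indicator fun p => q - cdf' μ p.2)
      ((iid μ n).prod (volume.restrict (Ioc 0 c))) :=
  Integrable.of_bound (((measurable_const.sub (measurable_cdf'.comp measurable_snd)).indicator
      (measurableSet_le measurable_const measurable_empCdf_uncurry)).aestronglyMeasurable) 1
    (Filter.Eventually.of_forall fun p =>
      (norm_indicator_le_norm_self _ p).trans (abs_sub_cdf'_le_one hq p.2))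

theorem integrable_indicator_empCdf_lt (hq : q ∈ Icc 0 1) (hmean : Integrable (fun z => z) μ)
    (hn : n ≠ 0) (c : ℝ) :
    Integrable
      ({p : (Fin n → ℝ) × ℝ | empCdf n p.1 p.2 < q}.indicator fun p => cdf' μ p.2 - q)
      ((iid μ n).prod (volume.restrict (Ioi c))) := by
  refine integrable_prod_restrict_Ioi_of_norm_le (((measurable_cdf'.comp measurable_snd).sub
      measurable_const).indicator (measurableSet_lt measurable_empCdf_uncurry measurable_const)
    ).aestronglyMeasurable (integrable_sum_abs_iid hmean) (C := 1) (fun p => ?_)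
    fun ω t ht => ?_
  · exact (norm_indicator_le_norm_self _ p).trans
      ((norm_sub_rev _ _).trans_le (abs_sub_cdf'_le_one hq p.2))
  · exact indicator_of_notMem
      (not_lt.2 (hq.2.trans_eq (empCdf_eq_one_of_sum_abs_le hn ht).symm)) _

theorem expLoss_saa_eq (hq : q < 1) (hmean : Integrable (fun z => z) μ) (hn : n ≠ 0)
    (ω : Fin n → ℝ) :
    expLoss q μ (saa q n ω) = expLoss q μ (optDec q μ) +
      ((∫ t in Ioc 0 (optDec q μ), {p : (Fin n → ℝ) × ℝ | q ≤ empCdf n p.1 p.2}.indicator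
          (fun p => q - cdf' μ p.2) (ω, t))
        + ∫ t in Ioi (optDec q μ), {p : (Fin n → ℝ) × ℝ | empCdf n p.1 p.2 < q}.indicator
          (fun p => cdf' μ p.2 - q) (ω, t)) := by
  have := isProbabilityMeasure_empiricalMeasure hn ω
  rw [saa_eq_optDec, ← sub_eq_iff_eq_add', expLoss_optDec_sub_expLoss_optDec hmean hq,
    ← empCdf_eq_cdf']
  rfl

end Sample

theorem newsvendor_expected_regret_formula_general
    (q : ℝ) (hq : q ∈ Ioo (0:ℝ) 1)
    (μ : Measure ℝ) [IsProbabilityMeasure μ]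
    (hmean : Integrable (fun z => z) μ)
    (n : ℕ) (hn : 1 ≤ n) :
    (∫ ω, expLoss q μ (saa q n ω) ∂(iid μ n)) - expLoss q μ (optDec q μ)
      = (∫ z in (0:ℝ)..(optDec q μ),
            (q - cdf' μ z) * ((iid μ n) {ω | q ≤ empCdf n ω z}).toReal)
        + ∫ z in Ioi (optDec q μ),
            (cdf' μ z - q) * ((iid μ n) {ω | empCdf n ω z < q}).toReal := by
  have hn0 : n ≠ 0 := Nat.one_le_iff_ne_zero.1 hn
  have hint₁ := integrable_indicator_le_empCdf (n := n) (μ := μ) (Ioo_subset_Icc_self hq)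
    (optDec q μ)
  have hint₂ := integrable_indicator_empCdf_lt (Ioo_subset_Icc_self hq) hmean hn0 (optDec q μ)
  simp_rw [expLoss_saa_eq hq.2 hmean hn0]
  rw [integral_add (integrable_const _)
      (by exact hint₁.integral_prod_left.add hint₂.integral_prod_left),
    integral_add hint₁.integral_prod_left hint₂.integral_prod_left,
    integral_integral_indicator_swap (h := fun t => q - cdf' μ t)
      (measurableSet_le measurable_const measurable_empCdf_uncurry) hint₁,
    integral_integral_indicator_swap (h := fun t => cdf' μ t - q)
      (measurableSet_lt measurable_empCdf_uncurry measurable_const) hint₂,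
    integral_const, probReal_univ, one_smul, add_sub_cancel_left,
    intervalIntegral.integral_of_le (optDec_nonneg hq.2)]
  rfl

/-- For `q ∈ (0,1)`, a probability distribution `μ` on `[0,∞)` with finite mean,
and the SAA decision `â` based on `n` iid samples, the expected additive regret satisfies
`E[L(â)] − L(a*) = ∫₀^{a*} (q−F(z))·Pr[F̂(z) ≥ q] dz + ∫_{a*}^∞ (F(z)−q)·Pr[F̂(z) < q] dz`. -/
theorem newsvendor_expected_regret_formula
    (q : ℝ) (hq : q ∈ Ioo (0:ℝ) 1)
    (μ : Measure ℝ) [IsProbabilityMeasure μ] (hsupp : μ (Iio 0) = 0)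
    (hmean : Integrable (fun z => z) μ)
    (n : ℕ) (hn : 1 ≤ n) :
    (∫ ω, expLoss q μ (saa q n ω) ∂(iid μ n)) - expLoss q μ (optDec q μ)
      = (∫ z in (0:ℝ)..(optDec q μ),
            (q - cdf' μ z) * ((iid μ n) {ω | q ≤ empCdf n ω z}).toReal)
        + ∫ z in Ioi (optDec q μ),
            (cdf' μ z - q) * ((iid μ n) {ω | empCdf n ω z < q}).toReal :=
  newsvendor_expected_regret_formula_general q hq μ hmean n hn
end
end

section
/- Fix q ∈ (0,1), β ∈ [0,∞), γ ∈ (0,∞), and ζ ∈ (0, (min{q,1−q})^{1/(β+1)}/γ]. For every (possibly randomized) data-driven algorithm that maps n IID demand samples to a decision A ≥ 0, there exists a (β,γ,ζ)-clustered probability distribution taking values in [0,1], with CDF F, optimal decision a*, and expected loss L, such that with probability at least 1/3, the additive regret satisfies L(A) − L(a*) ≥ (1/(8·max{γ,1}))·(q(1−q)/(3√n))^{(β+2)/(β+1)}. -/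
open MeasureTheory Set

noncomputable section

/-!
Le Cam's two-point method. Let `twoPoint p t` put mass `p` at `0` and `1 - p` at `t`, and take
`p = q ± δ` with `δ = q(1-q)/(3√n)`. The optimal decision is `0` for `p = q + δ` and `t` for
`p = q - δ`, and a decision on the wrong side of `t/2` costs regret at least `δ t / 2`. For the
event `{A ≥ t/2}`, its probability under one law plus that of its complement under the other is at
least the overlap `∑ min` of the two sample laws. By Cauchy–Schwarz the overlap is controlled by
the Hellinger affinity, which tensorizes to `(1 - δ²/(q(1-q)))^n ≥ (1 - 1/(36n))^n`, giving an
overlap of at least `2/3`; so one of the two laws makes the algorithm err with probability at least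
`1/3`. The width `t = min (δ^{1/(β+1)}/γ) 1` is what keeps both laws `(β,γ,ζ)`-clustered, and
`δ t / 2` dominates the claimed bound.
-/

section Affinity

open Finset

variable {ι : Type*} [Fintype ι]

lemma min_eq_half_sub_abs (x y : ℝ) : min x y = (x + y - |x - y|) / 2 := by
  rcases le_total x y with h | h
  · rw [min_eq_left h, abs_of_nonpos (sub_nonpos.2 h)]; ring
  · rw [min_eq_right h, abs_of_nonneg (sub_nonneg.2 h)]; ring

lemma sq_one_sub_sum_min_le {a b : ι → ℝ} (ha : ∀ i, 0 ≤ a i) (hb : ∀ i, 0 ≤ b i)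
    (ha1 : ∑ i, a i = 1) (hb1 : ∑ i, b i = 1) :
    (1 - ∑ i, min (a i) (b i)) ^ 2 ≤ 1 - (∑ i, √(a i * b i)) ^ 2 := by
  set u := fun i => √(a i)
  set v := fun i => √(b i)
  have hu : ∀ i, u i ^ 2 = a i := fun i => Real.sq_sqrt (ha i)
  have hv : ∀ i, v i ^ 2 = b i := fun i => Real.sq_sqrt (hb i)
  have huv : ∀ i, √(a i * b i) = u i * v i := fun i => Real.sqrt_mul (ha i) _
  have habs : ∀ i, |a i - b i| = |u i - v i| * (u i + v i) := fun i => by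
    rw [← hu, ← hv, sq_sub_sq, abs_mul, mul_comm,
      abs_of_nonneg (add_nonneg (Real.sqrt_nonneg _) (Real.sqrt_nonneg _))]
  have hoverlap : 1 - ∑ i, min (a i) (b i) = (∑ i, |u i - v i| * (u i + v i)) / 2 := by
    simp only [min_eq_half_sub_abs, ← habs, ← sum_div, sum_sub_distrib, sum_add_distrib, ha1, hb1]
    ring
  have hminus : ∑ i, |u i - v i| ^ 2 = 2 - 2 * ∑ i, u i * v i := by
    simp only [sq_abs, sub_sq, sum_add_distrib, sum_sub_distrib, hu, hv, ha1, hb1, ← mul_sum,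
      mul_assoc]
    ring
  have hplus : ∑ i, (u i + v i) ^ 2 = 2 + 2 * ∑ i, u i * v i := by
    simp only [add_sq, sum_add_distrib, hu, hv, ha1, hb1, ← mul_sum, mul_assoc]
    ring
  have hcs := sum_mul_sq_le_sq_mul_sq univ (fun i => |u i - v i|) (fun i => u i + v i)
  rw [hoverlap, sum_congr rfl fun i _ => huv i]
  rw [hminus, hplus] at hcs
  nlinarith

lemma sum_sqrt_prod_mul_prod {α : Type*} [Fintype α] {a b : α → ℝ} (ha : ∀ x, 0 ≤ a x)
    (hb : ∀ x, 0 ≤ b x) (n : ℕ) :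
    ∑ f : Fin n → α, √((∏ i, a (f i)) * ∏ i, b (f i)) = (∑ x, √(a x * b x)) ^ n := by
  rw [Fintype.sum_pow]
  refine sum_congr rfl fun f _ => ?_
  rw [← prod_mul_distrib, Real.sqrt_prod _ fun i _ => mul_nonneg (ha _) (hb _)]

end Affinity

def bernoulliWeight (p : ℝ) (b : Bool) : ℝ := if b then p else 1 - p

section Bernoulli

open Finset

variable {p q δ : ℝ}

lemma bernoulliWeight_nonneg (hp0 : 0 ≤ p) (hp1 : p ≤ 1) (b : Bool) : 0 ≤ bernoulliWeight p b := by
  cases b <;> simp [bernoulliWeight] <;> linarith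

lemma sum_prod_bernoulliWeight (p : ℝ) (n : ℕ) :
    ∑ f : Fin n → Bool, ∏ i, bernoulliWeight p (f i) = 1 := by
  rw [← Fintype.sum_pow]
  simp [bernoulliWeight]

lemma sub_sq_div_le_sqrt_add_mul_sub (hq : 0 < q) (hδ : |δ| ≤ q) :
    q - δ ^ 2 / q ≤ √((q + δ) * (q - δ)) := by
  have hδq : δ ^ 2 ≤ q ^ 2 := sq_le_sq' (abs_le.1 hδ).1 (abs_le.1 hδ).2
  have hx : δ ^ 2 / q ≤ q := by rw [div_le_iff₀ hq]; nlinarith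
  have hxq : δ ^ 2 / q * q = δ ^ 2 := div_mul_cancel₀ _ hq.ne'
  rw [Real.le_sqrt (by linarith) (by nlinarith)]
  nlinarith [div_nonneg (sq_nonneg δ) hq.le]

lemma one_sub_le_bernoulli_affinity (hq0 : 0 < q) (hq1 : q < 1) (hδq : |δ| ≤ q)
    (hδq' : |δ| ≤ 1 - q) :
    1 - δ ^ 2 / (q * (1 - q)) ≤
      ∑ b, √(bernoulliWeight (q + δ) b * bernoulliWeight (q - δ) b) := by
  have h0 := sub_sq_div_le_sqrt_add_mul_sub hq0 hδq
  have h1 := sub_sq_div_le_sqrt_add_mul_sub (sub_pos.2 hq1) hδq'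
  have hsplit : δ ^ 2 / (q * (1 - q)) = δ ^ 2 / q + δ ^ 2 / (1 - q) := by
    field_simp [(sub_pos.2 hq1).ne']; ring
  simp only [Fintype.sum_bool, bernoulliWeight, if_true, if_false, Bool.false_eq_true]
  rw [hsplit, show 1 - (q + δ) = 1 - q - δ by ring, show 1 - (q - δ) = 1 - q + δ by ring,
    show (1 - q - δ) * (1 - q + δ) = (1 - q + δ) * (1 - q - δ) by ring]
  linarith

lemma two_thirds_le_sum_min_prod_bernoulliWeight (n : ℕ) (hq0 : 0 < q) (hq1 : q < 1)
    (hδq : |δ| ≤ q) (hδq' : |δ| ≤ 1 - q) (hδn : 36 * n * δ ^ 2 ≤ q * (1 - q)) :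
    2 / 3 ≤ ∑ f : Fin n → Bool,
      min (∏ i, bernoulliWeight (q + δ) (f i)) (∏ i, bernoulliWeight (q - δ) (f i)) := by
  have hwp : ∀ b, 0 ≤ bernoulliWeight (q + δ) b :=
    bernoulliWeight_nonneg (by linarith [(abs_le.1 hδq).1]) (by linarith [(abs_le.1 hδq').2])
  have hwm : ∀ b, 0 ≤ bernoulliWeight (q - δ) b :=
    bernoulliWeight_nonneg (by linarith [(abs_le.1 hδq).2]) (by linarith [(abs_le.1 hδq').1])
  have hle := sq_one_sub_sum_min_le (fun f : Fin n → Bool => prod_nonneg fun i _ => hwp (f i))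
    (fun f => prod_nonneg fun i _ => hwm (f i)) (sum_prod_bernoulliWeight _ n)
    (sum_prod_bernoulliWeight _ n)
  rw [sum_sqrt_prod_mul_prod hwp hwm] at hle
  set r := ∑ b, √(bernoulliWeight (q + δ) b * bernoulliWeight (q - δ) b)
  have hr0 : 0 ≤ r := sum_nonneg fun b _ => Real.sqrt_nonneg _
  have hr : 1 - δ ^ 2 / (q * (1 - q)) ≤ r := one_sub_le_bernoulli_affinity hq0 hq1 hδq hδq'
  have hx : 36 * n * (δ ^ 2 / (q * (1 - q))) ≤ 1 := by
    rw [mul_div_assoc', div_le_one (mul_pos hq0 (sub_pos.2 hq1))]; exact hδn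
  have haffinity : 17 / 18 ≤ (r ^ n) ^ 2 := by
    have hbern := one_add_mul_le_pow (show (-2 : ℝ) ≤ r - 1 by linarith) (2 * n)
    rw [add_sub_cancel] at hbern
    rw [← pow_mul, mul_comm]
    push_cast at hbern
    nlinarith [Nat.cast_nonneg (α := ℝ) n]
  nlinarith

end Bernoulli

def twoPoint (p t : ℝ) : Measure ℝ :=
  ENNReal.ofReal p • Measure.dirac 0 + ENNReal.ofReal (1 - p) • Measure.dirac t

section TwoPoint

variable {p q t : ℝ}

lemma twoPoint_apply (p t : ℝ) {s : Set ℝ} (hs : MeasurableSet s) :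
    twoPoint p t s =
      ENNReal.ofReal p * s.indicator 1 0 + ENNReal.ofReal (1 - p) * s.indicator 1 t := by
  simp [twoPoint, Measure.dirac_apply' _ hs]

lemma isProbabilityMeasure_twoPoint (hp0 : 0 ≤ p) (hp1 : p ≤ 1) :
    IsProbabilityMeasure (twoPoint p t) := by
  constructor
  simp [twoPoint_apply p t MeasurableSet.univ, ← ENNReal.ofReal_add hp0 (sub_nonneg.2 hp1)]

lemma twoPoint_compl_Icc (ht0 : 0 ≤ t) (ht1 : t ≤ 1) : twoPoint p t (Icc 0 1)ᶜ = 0 := by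
  simp [twoPoint_apply p t measurableSet_Icc.compl, ht0, ht1]

lemma cdf'_twoPoint (hp0 : 0 ≤ p) (hp1 : p ≤ 1) (a : ℝ) :
    cdf' (twoPoint p t) a = (if 0 ≤ a then p else 0) + (if t ≤ a then 1 - p else 0) := by
  rw [cdf', twoPoint_apply p t measurableSet_Iic]
  by_cases h0 : 0 ≤ a <;> by_cases ht : t ≤ a <;>
    simp [h0, ht, ENNReal.toReal_add, hp0, hp1]

lemma optDec_twoPoint_of_le (hp0 : 0 ≤ p) (hp1 : p ≤ 1) (hqp : q ≤ p) :
    optDec q (twoPoint p t) = 0 := by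
  have hset : {a | 0 ≤ a ∧ q ≤ cdf' (twoPoint p t) a} = Ici 0 := by
    ext a
    rw [mem_ofPred_eq, mem_Ici, cdf'_twoPoint hp0 hp1]
    by_cases h0 : 0 ≤ a
    · by_cases hta : t ≤ a <;> simp [hta, h0, hqp, hqp.trans hp1]
    · simp [h0]
  rw [optDec, hset, csInf_Ici]

lemma optDec_twoPoint_of_lt (hp0 : 0 ≤ p) (hpq : p < q) (hq1 : q ≤ 1) (ht : 0 ≤ t) :
    optDec q (twoPoint p t) = t := by
  have hset : {a | 0 ≤ a ∧ q ≤ cdf' (twoPoint p t) a} = Ici t := by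
    ext a
    rw [mem_ofPred_eq, mem_Ici, cdf'_twoPoint hp0 (hpq.le.trans hq1)]
    by_cases hta : t ≤ a
    · simp [hta, ht.trans hta, hq1]
    · by_cases h0 : 0 ≤ a <;> simp [hta, h0, not_le.1, hpq]
  rw [optDec, hset, csInf_Ici]

lemma integrable_nvLoss_dirac (q a x : ℝ) : Integrable (nvLoss q a) (Measure.dirac x) := by
  have hm : Measurable (nvLoss q a) := by unfold nvLoss; fun_prop
  refine ⟨hm.aestronglyMeasurable, ?_⟩
  simp [HasFiniteIntegral, lintegral_dirac]

lemma expLoss_twoPoint (hp0 : 0 ≤ p) (hp1 : p ≤ 1) (a : ℝ) :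
    expLoss q (twoPoint p t) a = p * nvLoss q a 0 + (1 - p) * nvLoss q a t := by
  rw [expLoss, twoPoint, integral_add_measure
    ((integrable_nvLoss_dirac q a 0).smul_measure ENNReal.ofReal_ne_top)
    ((integrable_nvLoss_dirac q a t).smul_measure ENNReal.ofReal_ne_top)]
  simp [integral_smul_measure, hp0, hp1]

lemma nvLoss_of_le {q a z : ℝ} (h : z ≤ a) : nvLoss q a z = (1 - q) * (a - z) := by
  simp [nvLoss, h]

lemma nvLoss_of_ge {q a z : ℝ} (h : a ≤ z) : nvLoss q a z = q * (z - a) := by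
  simp [nvLoss, h]

lemma mul_min_le_regret_twoPoint_add {δ a : ℝ} (hq0 : 0 ≤ q) (hδ0 : 0 ≤ δ) (hqδ : q + δ ≤ 1)
    (ht : 0 ≤ t) (ha : 0 ≤ a) :
    δ * min a t ≤ expLoss q (twoPoint (q + δ) t) a
      - expLoss q (twoPoint (q + δ) t) (optDec q (twoPoint (q + δ) t)) := by
  have hp0 : 0 ≤ q + δ := add_nonneg hq0 hδ0
  rw [optDec_twoPoint_of_le hp0 hqδ (le_add_of_nonneg_right hδ0), expLoss_twoPoint hp0 hqδ,
    expLoss_twoPoint hp0 hqδ, nvLoss_of_le ha, nvLoss_of_le le_rfl, nvLoss_of_ge ht]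
  rcases le_total a t with hat | hta
  · rw [min_eq_left hat, nvLoss_of_ge hat]
    linarith
  · rw [min_eq_right hta, nvLoss_of_le hta]
    nlinarith [mul_nonneg (sub_nonneg.2 hta) (by linarith : (0 : ℝ) ≤ 1 - q)]

lemma mul_sub_le_regret_twoPoint_sub {δ a : ℝ} (hδ0 : 0 < δ) (hδq : δ ≤ q) (hq1 : q ≤ 1)
    (ha : 0 ≤ a) (hat : a ≤ t) :
    δ * (t - a) ≤ expLoss q (twoPoint (q - δ) t) a
      - expLoss q (twoPoint (q - δ) t) (optDec q (twoPoint (q - δ) t)) := by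
  have hp0 : 0 ≤ q - δ := sub_nonneg.2 hδq
  have hp1 : q - δ ≤ 1 := by linarith
  rw [optDec_twoPoint_of_lt hp0 (sub_lt_self q hδ0) hq1 (ha.trans hat), expLoss_twoPoint hp0 hp1,
    expLoss_twoPoint hp0 hp1, nvLoss_of_le ha, nvLoss_of_ge hat, nvLoss_of_le (ha.trans hat),
    nvLoss_of_le le_rfl]
  linarith

lemma clustered_twoPoint {β γ ζ : ℝ} (hq0 : 0 < q) (hq1 : q < 1) (hβ : 0 ≤ β) (hγ : 0 < γ)
    (hp0 : 0 ≤ p) (hp1 : p ≤ 1) (hpq : p ≠ q) (ht : 0 ≤ t)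
    (htγ : t ≤ |p - q| ^ (1 / (β + 1)) / γ) (hζγ : ζ ≤ min q (1 - q) ^ (1 / (β + 1)) / γ) :
    Clustered q β γ ζ (twoPoint p t) := by
  intro a ha
  set c := optDec q (twoPoint p t)
  have hc : c = 0 ∨ c = t := (lt_or_gt_of_ne hpq).elim
    (fun h => Or.inr (optDec_twoPoint_of_lt hp0 h hq1.le ht))
    (fun h => Or.inl (optDec_twoPoint_of_le hp0 hp1 h.le))
  have hζ : |a - c| ≤ ζ := abs_sub_le_iff.2 ⟨by linarith [ha.2], by linarith [ha.1]⟩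
  suffices ∃ m, 0 ≤ m ∧ m ≤ |cdf' (twoPoint p t) a - q| ∧ |a - c| ≤ m ^ (1 / (β + 1)) / γ by
    obtain ⟨m, hm0, hm, hγm⟩ := this
    rw [one_div_mul_eq_div]
    exact hγm.trans (by gcongr)
  have hmin0 : 0 ≤ min q (1 - q) := le_min hq0.le (sub_nonneg.2 hq1.le)
  rw [cdf'_twoPoint hp0 hp1]
  rcases lt_or_ge a 0 with h0 | h0
  · refine ⟨min q (1 - q), hmin0, ?_, hζ.trans hζγ⟩
    simp [not_le.2 h0, not_le.2 (h0.trans_le ht), abs_of_pos hq0]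
  rcases lt_or_ge a t with hta | hta
  · refine ⟨|p - q|, abs_nonneg _, by simp [h0, not_le.2 hta], le_trans ?_ htγ⟩
    rcases hc with hc | hc <;> rw [hc, abs_le] <;> constructor <;> linarith
  · refine ⟨min q (1 - q), hmin0, ?_, hζ.trans hζγ⟩
    simp [h0, hta, abs_of_pos (sub_pos.2 hq1)]

end TwoPoint

lemma one_third_le_or_one_third_le {x y : ENNReal} (h : ENNReal.ofReal (2 / 3) ≤ x + y) :
    1 / 3 ≤ x ∨ 1 / 3 ≤ y := by
  by_contra! hxy
  have h23 : ENNReal.ofReal (2 / 3) = 1 / 3 + 1 / 3 := by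
    rw [ENNReal.div_add_div_same, ENNReal.ofReal_div_of_pos (by norm_num)]
    norm_num
  exact (h.trans_lt (h23 ▸ ENNReal.add_lt_add hxy.1 hxy.2)).false

-- `f i = true` records that the `i`-th sample is the atom `0`, of mass `p` under `twoPoint p t`.
def samplePoint {n : ℕ} (t : ℝ) (f : Fin n → Bool) : Fin n → ℝ := fun i => if f i then 0 else t

section Sample

open Finset

variable {n : ℕ} {p p' t : ℝ}

lemma iid_twoPoint (hp0 : 0 ≤ p) (hp1 : p ≤ 1) :
    iid (twoPoint p t) n = ∑ f : Fin n → Bool,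
      ENNReal.ofReal (∏ i, bernoulliWeight p (f i)) • Measure.dirac (samplePoint t f) := by
  have := isProbabilityMeasure_twoPoint (t := t) hp0 hp1
  refine Measure.pi_eq fun s hs => ?_
  have hbool : ∀ i, twoPoint p t (s i) = ∑ b : Bool,
      ENNReal.ofReal (bernoulliWeight p b) * (s i).indicator 1 (if b then 0 else t) := fun i => by
    simp [twoPoint_apply p t (hs i), bernoulliWeight, add_comm]
  rw [Measure.finsetSum_apply, prod_congr rfl fun i _ => hbool i, prod_univ_sum,
    Fintype.piFinset_univ]
  refine sum_congr rfl fun f _ => ?_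
  rw [Measure.smul_apply, Measure.dirac_apply' _ (MeasurableSet.univ_pi hs), smul_eq_mul,
    prod_mul_distrib, ENNReal.ofReal_prod_of_nonneg fun i _ => bernoulliWeight_nonneg hp0 hp1 _,
    ← Finset.coe_univ, Set.indicator_pi_one_apply]
  rfl

lemma iid_twoPoint_prod_apply (hp0 : 0 ≤ p) (hp1 : p ≤ 1) {Ω : Type*} [MeasurableSpace Ω]
    (ν : Measure Ω) [SFinite ν] {A : Set ((Fin n → ℝ) × Ω)} (hA : MeasurableSet A) :
    (iid (twoPoint p t) n).prod ν A = ∑ f : Fin n → Bool,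
      ENNReal.ofReal (∏ i, bernoulliWeight p (f i)) * ν (Prod.mk (samplePoint t f) ⁻¹' A) := by
  have := isProbabilityMeasure_twoPoint (t := t) hp0 hp1
  rw [Measure.prod_apply hA, iid_twoPoint hp0 hp1, lintegral_finsetSum_measure]
  refine sum_congr rfl fun f _ => ?_
  rw [lintegral_smul_measure, lintegral_dirac' _ (measurable_measure_prodMk_left hA), smul_eq_mul]

lemma min_le_mul_add_mul_one_sub {x y g : ENNReal} (hg : g ≤ 1) :
    min x y ≤ x * g + y * (1 - g) :=
  calc min x y = min x y * g + min x y * (1 - g) := by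
        rw [← mul_add, add_tsub_cancel_of_le hg, mul_one]
    _ ≤ x * g + y * (1 - g) := by gcongr <;> simp

lemma ofReal_sum_min_le_iid_twoPoint_prod (hp0 : 0 ≤ p) (hp1 : p ≤ 1) (hp0' : 0 ≤ p')
    (hp1' : p' ≤ 1) {Ω : Type*} [MeasurableSpace Ω] (ν : Measure Ω) [IsProbabilityMeasure ν]
    {E : Set ((Fin n → ℝ) × Ω)} (hE : MeasurableSet E) :
    ENNReal.ofReal (∑ f : Fin n → Bool,
        min (∏ i, bernoulliWeight p (f i)) (∏ i, bernoulliWeight p' (f i))) ≤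
      (iid (twoPoint p t) n).prod ν E + (iid (twoPoint p' t) n).prod ν Eᶜ := by
  rw [iid_twoPoint_prod_apply hp0 hp1 ν hE, iid_twoPoint_prod_apply hp0' hp1' ν hE.compl,
    ← sum_add_distrib, ENNReal.ofReal_sum_of_nonneg fun f _ => le_min
      (prod_nonneg fun i _ => bernoulliWeight_nonneg hp0 hp1 _)
      (prod_nonneg fun i _ => bernoulliWeight_nonneg hp0' hp1' _)]
  refine sum_le_sum fun f _ => ?_
  rw [ENNReal.ofReal_min, Set.preimage_compl,
    prob_compl_eq_one_sub (measurable_prodMk_left hE)]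
  exact min_le_mul_add_mul_one_sub prob_le_one

lemma one_third_le_iid_twoPoint_prod_or {q δ : ℝ} (hq0 : 0 < q) (hq1 : q < 1) (hδq : |δ| ≤ q)
    (hδq' : |δ| ≤ 1 - q) (hδn : 36 * n * δ ^ 2 ≤ q * (1 - q)) {Ω : Type*} [MeasurableSpace Ω]
    (ν : Measure Ω) [IsProbabilityMeasure ν] {E : Set ((Fin n → ℝ) × Ω)} (hE : MeasurableSet E) :
    1 / 3 ≤ (iid (twoPoint (q + δ) t) n).prod ν E ∨
      1 / 3 ≤ (iid (twoPoint (q - δ) t) n).prod ν Eᶜ := by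
  have hδ := abs_le.1 hδq
  have hδ' := abs_le.1 hδq'
  refine one_third_le_or_one_third_le <| (ENNReal.ofReal_le_ofReal
    (two_thirds_le_sum_min_prod_bernoulliWeight n hq0 hq1 hδq hδq' hδn)).trans ?_
  exact ofReal_sum_min_le_iid_twoPoint_prod (by linarith) (by linarith) (by linarith)
    (by linarith) ν hE

end Sample

lemma separation_bounds {q : ℝ} {n : ℕ} (hq0 : 0 < q) (hq1 : q < 1) (hn : 1 ≤ n) :
    0 < q * (1 - q) / (3 * √n) ∧ q * (1 - q) / (3 * √n) ≤ q ∧ q * (1 - q) / (3 * √n) ≤ 1 - q ∧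
      36 * n * (q * (1 - q) / (3 * √n)) ^ 2 ≤ q * (1 - q) := by
  have hqq0 : 0 < q * (1 - q) := mul_pos hq0 (sub_pos.2 hq1)
  have hqq : q * (1 - q) ≤ 1 / 4 := by nlinarith [sq_nonneg (q - 1 / 2)]
  have hsqrt : 1 ≤ √(n : ℝ) := Real.one_le_sqrt.2 (by exact_mod_cast hn)
  have hδ3 : q * (1 - q) / (3 * √n) ≤ q * (1 - q) / 3 :=
    div_le_div_of_nonneg_left hqq0.le (by norm_num) (by linarith)
  have hsq : 36 * n * (q * (1 - q) / (3 * √n)) ^ 2 = 4 * (q * (1 - q)) ^ 2 := by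
    field_simp
    rw [Real.sq_sqrt (Nat.cast_nonneg n)]
    ring
  refine ⟨by positivity, by nlinarith, by nlinarith, by rw [hsq]; nlinarith⟩

lemma div_mul_rpow_le_mul_min {β γ δ : ℝ} (hβ : 0 ≤ β) (hγ : 0 < γ) (hδ0 : 0 < δ) (hδ1 : δ ≤ 1) :
    1 / (8 * max γ 1) * δ ^ ((β + 2) / (β + 1)) ≤ δ * (min (δ ^ (1 / (β + 1)) / γ) 1 / 2) := by
  set e := δ ^ (1 / (β + 1))
  set m := max γ 1
  have hm : 0 < m := lt_max_of_lt_right one_pos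
  have he1 : e ≤ 1 := Real.rpow_le_one hδ0.le hδ1 (by positivity)
  have hem : e / m ≤ min (e / γ) 1 :=
    le_min (div_le_div_of_nonneg_left (by positivity) hγ (le_max_left _ _))
      ((div_le_one hm).2 (he1.trans (le_max_right _ _)))
  have hsplit : δ ^ ((β + 2) / (β + 1)) = δ * e := by
    rw [← Real.rpow_one_add' hδ0.le (by positivity)]
    congr 1
    field_simp
    ring
  calc 1 / (8 * m) * δ ^ ((β + 2) / (β + 1)) = δ * (e / m) / 8 := by
        rw [hsplit]; field_simp
    _ ≤ δ * min (e / γ) 1 / 8 := by gcongr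
    _ ≤ δ * (min (e / γ) 1 / 2) := by
        have : 0 ≤ δ * min (e / γ) 1 := mul_nonneg hδ0.le (le_min (by positivity) zero_le_one)
        linarith

/-- Additive-regret lower bound, high-probability version. For every (possibly
randomized) data-driven algorithm mapping `n` iid samples (and internal randomness) to a
nonnegative decision, there is a `(β,γ,ζ)`-clustered distribution on `[0,1]` on which, with
probability at least `1/3`,
`L(A) − L(a*) ≥ (1/(8·max{γ,1}))·(q(1−q)/(3√n))^{(β+2)/(β+1)}`. -/
theorem newsvendor_additive_regret_lower_bound
    (q β γ ζ : ℝ) (hq : q ∈ Ioo (0:ℝ) 1) (hβ : 0 ≤ β) (hγ : 0 < γ)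
    (hζ : ζ ∈ Ioc 0 ((min q (1 - q)) ^ ((1:ℝ)/(β+1)) / γ))
    (n : ℕ) (hn : 1 ≤ n)
    (Ω : Type) [MeasurableSpace Ω] (ν : Measure Ω) [IsProbabilityMeasure ν]
    (alg : (Fin n → ℝ) × Ω → ℝ) (halg : Measurable alg) (halg0 : ∀ p, 0 ≤ alg p) :
    ∃ μ : Measure ℝ, IsProbabilityMeasure μ ∧ μ (Icc (0:ℝ) 1)ᶜ = 0 ∧
      Clustered q β γ ζ μ ∧
      (1 : ENNReal)/3 ≤ ((iid μ n).prod ν)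
        {p | (1/(8 * max γ 1)) * (q*(1-q)/(3*Real.sqrt n)) ^ ((β+2)/(β+1))
              ≤ expLoss q μ (alg p) - expLoss q μ (optDec q μ)} := by
  obtain ⟨hq0, hq1⟩ := hq
  obtain ⟨hδ0, hδq, hδq', hδn⟩ := separation_bounds hq0 hq1 hn
  set δ := q * (1 - q) / (3 * √n)
  set t := min (δ ^ (1 / (β + 1)) / γ) 1
  have ht0 : 0 ≤ t := le_min (by positivity) zero_le_one
  have hclust : ∀ p, |p - q| = δ → Clustered q β γ ζ (twoPoint p t) := fun p hp => by
    have hpq := abs_le.1 hp.le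
    exact clustered_twoPoint hq0 hq1 hβ hγ (by linarith) (by linarith)
      (sub_ne_zero.1 (abs_pos.1 (hp ▸ hδ0))) ht0 (hp ▸ min_le_left _ _) hζ.2
  have hε := div_mul_rpow_le_mul_min hβ hγ hδ0 (by linarith)
  have hE : MeasurableSet {x | t / 2 ≤ alg x} := measurableSet_le measurable_const halg
  rcases one_third_le_iid_twoPoint_prod_or hq0 hq1 ((abs_of_pos hδ0).trans_le hδq)
    ((abs_of_pos hδ0).trans_le hδq') hδn ν hE with h | h
  · refine ⟨_, isProbabilityMeasure_twoPoint (by linarith) (by linarith),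
      twoPoint_compl_Icc ht0 (min_le_right _ _), hclust _ (by simp [abs_of_pos hδ0]),
      h.trans (measure_mono fun x hx => hε.trans ?_)⟩
    exact (mul_le_mul_of_nonneg_left (le_min hx (by linarith)) hδ0.le).trans
      (mul_min_le_regret_twoPoint_add hq0.le hδ0.le (by linarith) ht0 (halg0 x))
  · refine ⟨_, isProbabilityMeasure_twoPoint (by linarith) (by linarith),
      twoPoint_compl_Icc ht0 (min_le_right _ _), hclust _ (by simp [abs_of_pos hδ0]),
      h.trans (measure_mono fun x hx => hε.trans ?_)⟩
    have hx : alg x < t / 2 := not_le.1 hx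
    exact (mul_le_mul_of_nonneg_left (by linarith) hδ0.le).trans
      (mul_sub_le_regret_twoPoint_sub hδ0 hδq hq1.le (halg0 x) (by linarith))
end
end

section
/- Fix q ∈ (0,1), ζ > 0, and τ > 0. Let F be the CDF of a probability distribution on [0,∞) with finite mean, with optimal decision a* = inf{a ≥ 0 : F(a) ≥ q} satisfying a* ≥ ζ, and suppose F(a*−ζ) ≥ τ and F(a*+ζ) ≤ 1−τ. Then the optimal expected loss satisfies L(a*) ≥ ζτ. -/
open MeasureTheory Set

noncomputable section

/-! The overage `(a − z)⁺` is at least `ζ` wherever `z ≤ a − ζ`, and the underage `(z − a)⁺` is at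
least `ζ` wherever `z ≥ a + ζ`. At `a = a*` both tails carry mass at least `τ`, so by Markov's
inequality `L(a*) ≥ (1 − q)·ζτ + q·ζτ = ζτ`. -/

section NewsvendorLowerBound

variable {μ : Measure ℝ} [IsFiniteMeasure μ]

lemma mul_measureReal_le_integral_of_le_on {f : ℝ → ℝ} {s : Set ℝ} {ζ : ℝ} (hf0 : 0 ≤ f)
    (hf : Integrable f μ) (hζ : 0 ≤ ζ) (hs : ∀ z ∈ s, ζ ≤ f z) :
    ζ * μ.real s ≤ ∫ z, f z ∂μ :=
  calc ζ * μ.real s ≤ ζ * μ.real {z | ζ ≤ f z} :=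
      mul_le_mul_of_nonneg_left (measureReal_mono (μ := μ) hs) hζ
    _ ≤ ∫ z, f z ∂μ := mul_meas_ge_le_integral_of_nonneg (.of_forall hf0) hf ζ

lemma integrable_max_sub_const (hmean : Integrable (fun z => z) μ) (a : ℝ) :
    Integrable (fun z => max (z - a) 0) μ :=
  (hmean.sub (integrable_const a)).pos_part

lemma integrable_max_const_sub (hmean : Integrable (fun z => z) μ) (a : ℝ) :
    Integrable (fun z => max (a - z) 0) μ :=
  ((integrable_const a).sub hmean).pos_part

lemma expLoss_eq (hmean : Integrable (fun z => z) μ) (q a : ℝ) :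
    expLoss q μ a = q * ∫ z, max (z - a) 0 ∂μ + (1 - q) * ∫ z, max (a - z) 0 ∂μ := by
  rw [expLoss, ← integral_const_mul, ← integral_const_mul]
  exact integral_add ((integrable_max_sub_const hmean a).const_mul q)
    ((integrable_max_const_sub hmean a).const_mul (1 - q))

lemma mul_measureReal_Ici_le_integral_max_sub (hmean : Integrable (fun z => z) μ) {a ζ : ℝ}
    (hζ : 0 ≤ ζ) : ζ * μ.real (Ici (a + ζ)) ≤ ∫ z, max (z - a) 0 ∂μ :=
  mul_measureReal_le_integral_of_le_on (fun _ => le_max_right _ _)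
    (integrable_max_sub_const hmean a) hζ
    fun z hz => le_max_of_le_left (by linarith [mem_Ici.mp hz])

lemma mul_measureReal_Iic_le_integral_max_const_sub (hmean : Integrable (fun z => z) μ) {a ζ : ℝ}
    (hζ : 0 ≤ ζ) : ζ * μ.real (Iic (a - ζ)) ≤ ∫ z, max (a - z) 0 ∂μ :=
  mul_measureReal_le_integral_of_le_on (fun _ => le_max_right _ _)
    (integrable_max_const_sub hmean a) hζ
    fun z hz => le_max_of_le_left (by linarith [mem_Iic.mp hz])

end NewsvendorLowerBound

lemma one_sub_cdf'_le_measureReal_Ici (μ : Measure ℝ) [IsProbabilityMeasure μ] (b : ℝ) :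
    1 - cdf' μ b ≤ μ.real (Ici b) := by
  rw [cdf', ← measureReal_def, ← probReal_compl_eq_one_sub measurableSet_Iic, compl_Iic]
  exact measureReal_mono Ioi_subset_Ici_self

theorem optimal_loss_lower_bound_general
    (q ζ τ : ℝ) (hq : q ∈ Ioo (0:ℝ) 1) (hζ : 0 < ζ)
    (μ : Measure ℝ) [IsProbabilityMeasure μ]
    (hmean : Integrable (fun z => z) μ)
    (hlo : τ ≤ cdf' μ (optDec q μ - ζ)) (hhi : cdf' μ (optDec q μ + ζ) ≤ 1 - τ) :
    ζ * τ ≤ expLoss q μ (optDec q μ) := by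
  obtain ⟨hq0, hq1⟩ := hq
  set a := optDec q μ
  have hunder : ζ * τ ≤ ∫ z, max (z - a) 0 ∂μ :=
    calc ζ * τ ≤ ζ * μ.real (Ici (a + ζ)) := by
          gcongr
          linarith [one_sub_cdf'_le_measureReal_Ici μ (a + ζ)]
      _ ≤ _ := mul_measureReal_Ici_le_integral_max_sub hmean hζ.le
  have hover : ζ * τ ≤ ∫ z, max (a - z) 0 ∂μ :=
    calc ζ * τ ≤ ζ * μ.real (Iic (a - ζ)) := by gcongr; exact hlo
      _ ≤ _ := mul_measureReal_Iic_le_integral_max_const_sub hmean hζ.le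
  calc ζ * τ = q * (ζ * τ) + (1 - q) * (ζ * τ) := by ring
    _ ≤ expLoss q μ a := by
        rw [expLoss_eq hmean]
        gcongr

/-- If `a* ≥ ζ`, `F(a*−ζ) ≥ τ` and `F(a*+ζ) ≤ 1−τ`, then the optimal expected
loss satisfies `L(a*) ≥ ζτ`. -/
theorem optimal_loss_lower_bound
    (q ζ τ : ℝ) (hq : q ∈ Ioo (0:ℝ) 1) (hζ : 0 < ζ) (hτ : 0 < τ)
    (μ : Measure ℝ) [IsProbabilityMeasure μ] (hsupp : μ (Iio 0) = 0)
    (hmean : Integrable (fun z => z) μ)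
    (ha : ζ ≤ optDec q μ)
    (hlo : τ ≤ cdf' μ (optDec q μ - ζ)) (hhi : cdf' μ (optDec q μ + ζ) ≤ 1 - τ) :
    ζ * τ ≤ expLoss q μ (optDec q μ) :=
  optimal_loss_lower_bound_general q ζ τ hq hζ μ hmean hlo hhi
end
end

section
/- Fix q ∈ (0,1), β ∈ [0,∞), γ > 0, and ζ ∈ (0, (min{q,1−q})^{1/(β+1)}/γ]. Let F be the CDF of a probability distribution with optimal decision a* = inf{a : F(a) ≥ q} such that equality holds in the clustering condition, i.e., |a − a*| = (1/γ)·|F(a) − q|^{1/(β+1)} for all a ∈ [a*−ζ, a*+ζ]. Then for every β' ∈ [0, β), every γ' > 0, and every ζ' > 0, the distribution F is NOT (β',γ',ζ')-clustered; that is, β is the minimum possible clustering exponent for F. -/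
open MeasureTheory Set

noncomputable section

/-
If `F` meets the clustering condition with equality, then `|F(a* + ε) − q| = (γ ε)^{β+1}` for
small `ε > 0`, while a `(β',γ',ζ')`-clustering would force `γ' ε ≤ (γ ε)^{(β+1)/(β'+1)}`.
Since `(β+1)/(β'+1) > 1`, the right-hand side is `o(ε)` as `ε → 0⁺`, a contradiction.
-/

open Filter Topology

lemma eventually_mul_rpow_lt_mul_self {r c k : ℝ} (hr : 1 < r) (hc : 0 ≤ c) (hk : 0 < k) :
    ∀ᶠ ε in 𝓝[>] (0 : ℝ), (c * ε) ^ r < k * ε := by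
  have hlim : Tendsto (fun ε : ℝ => c ^ r * ε ^ (r - 1)) (𝓝[>] 0) (𝓝 0) := by
    have h := (Real.continuousAt_rpow_const 0 (r - 1) (Or.inr (by linarith))).tendsto
    simpa [Real.zero_rpow (by linarith : r - 1 ≠ 0)] using
      (h.mono_left nhdsWithin_le_nhds).const_mul (c ^ r)
  filter_upwards [hlim.eventually_lt_const hk, self_mem_nhdsWithin] with ε hlt (hε : 0 < ε)
  calc (c * ε) ^ r = c ^ r * ε ^ (r - 1) * ε := by
        rw [Real.mul_rpow hc hε.le, Real.rpow_sub_one hε.ne']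
        field_simp
    _ < k * ε := mul_lt_mul_of_pos_right hlt hε

lemma Clustered.mul_le_abs_cdf_sub_rpow {q β γ ζ ε : ℝ} {μ : Measure ℝ}
    (h : Clustered q β γ ζ μ) (hγ : 0 < γ) (hε : 0 ≤ ε) (hεζ : ε ≤ ζ) :
    γ * ε ≤ |cdf' μ (optDec q μ + ε) - q| ^ ((1 : ℝ) / (β + 1)) := by
  have h := h (optDec q μ + ε) ⟨by linarith, by linarith⟩
  rwa [add_sub_cancel_left, abs_of_nonneg hε, one_div_mul_eq_div, le_div_iff₀' hγ] at h

lemma abs_cdf_sub_eq_of_clustering_eq {q β γ ζ ε : ℝ} {μ : Measure ℝ} (hγ : 0 < γ)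
    (hβ : β + 1 ≠ 0)
    (heq : ∀ a ∈ Icc (optDec q μ - ζ) (optDec q μ + ζ),
      |a - optDec q μ| = (1 / γ) * |cdf' μ a - q| ^ ((1 : ℝ) / (β + 1)))
    (hε : 0 ≤ ε) (hεζ : ε ≤ ζ) :
    |cdf' μ (optDec q μ + ε) - q| = (γ * ε) ^ (β + 1) := by
  have h := heq (optDec q μ + ε) ⟨by linarith, by linarith⟩
  rw [add_sub_cancel_left, abs_of_nonneg hε] at h
  conv_rhs => rw [h, ← mul_assoc, mul_one_div_cancel hγ.ne', one_mul, one_div,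
    Real.rpow_inv_rpow (abs_nonneg _) hβ]

theorem minimal_clustering_exponent_general
    (q β γ ζ : ℝ) (hγ : 0 < γ)
    (hζ : ζ ∈ Ioc 0 ((min q (1 - q)) ^ ((1:ℝ)/(β+1)) / γ))
    (μ : Measure ℝ)
    (heq : ∀ a ∈ Icc (optDec q μ - ζ) (optDec q μ + ζ),
      |a - optDec q μ| = (1/γ) * |cdf' μ a - q| ^ ((1:ℝ)/(β+1))) :
    ∀ β' γ' ζ' : ℝ, 0 ≤ β' → β' < β → 0 < γ' → 0 < ζ' →
      ¬ Clustered q β' γ' ζ' μ := by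
  intro β' γ' ζ' hβ' hβ'β hγ' hζ' hcl
  have hr : 1 < (β + 1) / (β' + 1) := (one_lt_div (by linarith)).2 (by linarith)
  obtain ⟨ε, hsmall, hεpos, hεlt⟩ := ((eventually_mul_rpow_lt_mul_self hr hγ.le hγ').and
    (Ioo_mem_nhdsGT (lt_min hζ.1 hζ'))).exists
  rw [lt_min_iff] at hεlt
  have hbound := hcl.mul_le_abs_cdf_sub_rpow hγ' hεpos.le hεlt.2.le
  rw [abs_cdf_sub_eq_of_clustering_eq hγ (by linarith) heq hεpos.le hεlt.1.le,
    ← Real.rpow_mul (by positivity), mul_one_div] at hbound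
  exact hsmall.not_ge hbound

/-- If the clustering condition holds with equality:
`|a − a*| = (1/γ)·|F(a) − q|^{1/(β+1)}` for all `a ∈ [a*−ζ, a*+ζ]`, then for every
`β' ∈ [0,β)` and all `γ' > 0`, `ζ' > 0`, the distribution is not `(β',γ',ζ')`-clustered;
i.e. `β` is the minimum possible clustering exponent. -/
theorem minimal_clustering_exponent
    (q β γ ζ : ℝ) (hq : q ∈ Ioo (0:ℝ) 1) (hβ : 0 ≤ β) (hγ : 0 < γ)
    (hζ : ζ ∈ Ioc 0 ((min q (1 - q)) ^ ((1:ℝ)/(β+1)) / γ))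
    (μ : Measure ℝ) [IsProbabilityMeasure μ]
    (heq : ∀ a ∈ Icc (optDec q μ - ζ) (optDec q μ + ζ),
      |a - optDec q μ| = (1/γ) * |cdf' μ a - q| ^ ((1:ℝ)/(β+1))) :
    ∀ β' γ' ζ' : ℝ, 0 ≤ β' → β' < β → 0 < γ' → 0 < ζ' →
      ¬ Clustered q β' γ' ζ' μ :=
  minimal_clustering_exponent_general q β γ ζ hγ hζ μ heq
end
end
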